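/- Let S ⊂ ℤ be a finite set with 0 ∉ S and −S = S, and let f(t) = Σ_{λ∈S} c(λ)·exp(2πiλt) be real-valued for every t ∈ ℝ. Then f has a zero in every closed interval of length D(S) = Σ_{λ∈S} 1/(4·|λ|); equivalently, if f(t) ≠ 0 for every t in an interval I ⊂ ℝ, then the length of I satisfies |I| ≤ Σ_{λ∈S} 1/(4·|λ|). -/

import Mathlib

/-!
Suppose `g(t) = ∑_{λ ∈ S} c(λ) e^{2πiλt}` has positive real part on `[u, v]`, and let `l > 0` be
in `S`. With `s = 1/(2l)` both `e^{2πi l s}` and `e^{-2πi l s}` equal `-1`, so `g(t) + g(t + s)` is a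
trigonometric polynomial with spectrum `S \ {±l}`, and its real part is positive on `[u, v - s]`.
Since removing `±l` lowers `D(S)` by exactly `s`, induction on `S` gives `v - u ≤ D(S)`.
A real `f` without zeros on `[u, v]` has constant sign there, so `f` or `-f` has positive real part.
-/

open Finset

theorem IsPreconnected.forall_lt_or_forall_gt {X β : Type*} [TopologicalSpace X] [LinearOrder β]
    [TopologicalSpace β] [OrderClosedTopology β] {s : Set X} (hs : IsPreconnected s)
    {g : X → β} (hg : ContinuousOn g s) {a : β} (hne : ∀ x ∈ s, g x ≠ a) :
    (∀ x ∈ s, a < g x) ∨ (∀ x ∈ s, g x < a) := by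
  by_contra! h
  obtain ⟨⟨x, hx, hgx⟩, ⟨y, hy, hgy⟩⟩ := h
  obtain ⟨z, hz, hgz⟩ := hs.intermediate_value hx hy hg ⟨hgx, hgy⟩
  exact hne z hz hgz

noncomputable def trigPoly (S : Finset ℤ) (c : ℤ → ℂ) (t : ℝ) : ℂ :=
  ∑ lam ∈ S, c lam * Complex.exp (2 * Real.pi * Complex.I * (lam : ℂ) * (t : ℂ))

noncomputable def zeroSpacingBound (S : Finset ℤ) : ℝ :=
  ∑ lam ∈ S, 1 / (4 * |(lam : ℝ)|)

namespace trigPoly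

variable (S : Finset ℤ) (c : ℤ → ℂ)

theorem continuous : Continuous (trigPoly S c) := by
  unfold trigPoly
  fun_prop

@[simp]
theorem empty (t : ℝ) : trigPoly ∅ c t = 0 :=
  sum_empty

theorem neg (t : ℝ) : trigPoly S (-c) t = -trigPoly S c t := by
  simp only [trigPoly, Pi.neg_apply, neg_mul, sum_neg_distrib]

theorem erase_of_eq_zero {l : ℤ} (hl : c l = 0) (t : ℝ) :
    trigPoly (S.erase l) c t = trigPoly S c t :=
  sum_erase _ (by rw [hl, zero_mul])

theorem add_add_shift (t s : ℝ) :
    trigPoly S c t + trigPoly S c (t + s) = trigPoly S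
      (fun m => c m * (1 + Complex.exp (2 * Real.pi * Complex.I * (m : ℂ) * (s : ℂ)))) t := by
  simp only [trigPoly, ← sum_add_distrib]
  refine sum_congr rfl fun m _ => ?_
  rw [Complex.ofReal_add, mul_add, Complex.exp_add]
  ring

end trigPoly

theorem one_add_cexp_eq_zero {l m : ℤ} (hl : 0 < l) (hm : m = l ∨ m = -l) :
    1 + Complex.exp (2 * Real.pi * Complex.I * (m : ℂ) * ((1 / (2 * l) : ℝ) : ℂ)) = 0 := by
  have hlC : (l : ℂ) ≠ 0 := by exact_mod_cast hl.ne'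
  rcases hm with rfl | rfl
  · have harg : 2 * Real.pi * Complex.I * (m : ℂ) * ((1 / (2 * m) : ℝ) : ℂ)
        = Real.pi * Complex.I := by
      push_cast
      field_simp
    rw [harg, Complex.exp_pi_mul_I, add_neg_cancel]
  · have harg : 2 * Real.pi * Complex.I * ((-l : ℤ) : ℂ) * ((1 / (2 * l) : ℝ) : ℂ)
        = -(Real.pi * Complex.I) := by
      push_cast
      field_simp
    rw [harg, Complex.exp_neg_pi_mul_I, add_neg_cancel]

theorem zeroSpacingBound_eq {S : Finset ℤ} {l : ℤ} (hl : 0 < l) (hlS : l ∈ S) (hnegS : -l ∈ S) :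
    zeroSpacingBound S = zeroSpacingBound ((S.erase l).erase (-l)) + 1 / (2 * l) := by
  have hnegS' : -l ∈ S.erase l := mem_erase.mpr ⟨by omega, hnegS⟩
  have habs : |(l : ℝ)| = l := abs_of_pos (by exact_mod_cast hl)
  rw [zeroSpacingBound, zeroSpacingBound, ← add_sum_erase _ _ hlS, ← add_sum_erase _ _ hnegS',
    Int.cast_neg, abs_neg, habs]
  ring

theorem zeroSpacingBound_nonneg (S : Finset ℤ) : 0 ≤ zeroSpacingBound S :=
  sum_nonneg fun _ _ => by positivity

theorem exists_pos_mem {S : Finset ℤ} (hS : S.Nonempty) (h0 : (0 : ℤ) ∉ S)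
    (hsym : ∀ lam ∈ S, -lam ∈ S) : ∃ l ∈ S, 0 < l := by
  obtain ⟨a, ha⟩ := hS
  refine ⟨|a|, ?_, abs_pos.mpr fun h => h0 (h ▸ ha)⟩
  rcases abs_choice a with h | h <;> rw [h]
  exacts [ha, hsym a ha]

theorem sub_le_zeroSpacingBound_of_re_pos (S : Finset ℤ) (h0 : (0 : ℤ) ∉ S)
    (hsym : ∀ lam ∈ S, -lam ∈ S) (c : ℤ → ℂ) (u v : ℝ)
    (hpos : ∀ t ∈ Set.Icc u v, 0 < (trigPoly S c t).re) :
    v - u ≤ zeroSpacingBound S := by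
  induction S using Finset.strongInduction generalizing c v with
  | H S ih =>
    rcases S.eq_empty_or_nonempty with rfl | hS
    · have hvu : v < u := by
        by_contra! huv
        simpa using hpos u ⟨le_rfl, huv⟩
      simp only [zeroSpacingBound, sum_empty]
      linarith
    obtain ⟨l, hlS, hl⟩ := exists_pos_mem hS h0 hsym
    set S' := (S.erase l).erase (-l)
    set s : ℝ := 1 / (2 * l)
    have hs : 0 < s := by positivity
    have hS' : S' ⊂ S := (erase_subset _ _).trans_ssubset (erase_ssubset hlS)
    have h0' : (0 : ℤ) ∉ S' := fun h => h0 (hS'.subset h)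
    have hsym' : ∀ m ∈ S', -m ∈ S' := by
      intro m hm
      simp only [S', mem_erase] at hm ⊢
      exact ⟨by omega, by omega, hsym m hm.2.2⟩
    set c' : ℤ → ℂ :=
      fun m => c m * (1 + Complex.exp (2 * Real.pi * Complex.I * (m : ℂ) * (s : ℂ)))
    have hc' : ∀ m, m = l ∨ m = -l → c' m = 0 := fun m hm => by
      simp only [c', s, one_add_cexp_eq_zero hl hm, mul_zero]
    have hpos' : ∀ t ∈ Set.Icc u (v - s), 0 < (trigPoly S' c' t).re := by
      rintro t ⟨hut, htv⟩
      rw [trigPoly.erase_of_eq_zero _ _ (hc' _ (.inr rfl)),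
        trigPoly.erase_of_eq_zero _ _ (hc' _ (.inl rfl)), ← trigPoly.add_add_shift, Complex.add_re]
      exact add_pos (hpos t ⟨hut, by linarith⟩) (hpos (t + s) ⟨by linarith, by linarith⟩)
    have hshorter := ih S' hS' h0' hsym' c' (v - s) hpos'
    rw [zeroSpacingBound_eq hl hlS (hsym l hlS)]
    linarith

theorem length_le_D_of_no_zero_general
    (S : Finset ℤ) (h0 : (0 : ℤ) ∉ S) (hsym : ∀ lam ∈ S, -lam ∈ S)
    (c : ℤ → ℂ) (f : ℝ → ℂ)
    (hf : ∀ t : ℝ, f t = ∑ lam ∈ S,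
      c lam * Complex.exp (2 * Real.pi * Complex.I * (lam : ℂ) * (t : ℂ)))
    (hreal : ∀ t : ℝ, (f t).im = 0)
    (u v : ℝ)
    (hne : ∀ t ∈ Set.Icc u v, f t ≠ 0) :
    v - u ≤ ∑ lam ∈ S, 1 / (4 * |(lam : ℝ)|) := by
  have hfg : f = trigPoly S c := funext hf
  have hre_ne : ∀ t ∈ Set.Icc u v, (trigPoly S c t).re ≠ 0 := fun t ht hre =>
    hne t ht (Complex.ext (by rw [hfg, hre]; rfl) (hreal t))
  have hcont : ContinuousOn (fun t => (trigPoly S c t).re) (Set.Icc u v) :=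
    (Complex.continuous_re.comp (trigPoly.continuous S c)).continuousOn
  rcases isPreconnected_Icc.forall_lt_or_forall_gt hcont hre_ne with hpos | hneg
  · exact sub_le_zeroSpacingBound_of_re_pos S h0 hsym c u v hpos
  · refine sub_le_zeroSpacingBound_of_re_pos S h0 hsym (-c) u v fun t ht => ?_
    rw [trigPoly.neg, Complex.neg_re]
    exact neg_pos.mpr (hneg t ht)

/-- One-dimensional case of **Theorem 1** (Kozma–Oravecz): if a real trigonometric
polynomial with symmetric spectrum `S ⊆ ℤ \ {0}` has no zero on a closed interval `[u, v]`,
then `v - u ≤ D(S) = ∑_{λ ∈ S} 1/(4|λ|)`; equivalently `f` has a zero in every closed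
interval of length `D(S)`. -/
theorem length_le_D_of_no_zero
    (S : Finset ℤ) (h0 : (0 : ℤ) ∉ S) (hsym : ∀ lam ∈ S, -lam ∈ S)
    (c : ℤ → ℂ) (f : ℝ → ℂ)
    (hf : ∀ t : ℝ, f t = ∑ lam ∈ S,
      c lam * Complex.exp (2 * Real.pi * Complex.I * (lam : ℂ) * (t : ℂ)))
    (hreal : ∀ t : ℝ, (f t).im = 0)
    (u v : ℝ) (huv : u ≤ v)
    (hne : ∀ t ∈ Set.Icc u v, f t ≠ 0) :
    v - u ≤ ∑ lam ∈ S, 1 / (4 * |(lam : ℝ)|) :=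
  length_le_D_of_no_zero_general S h0 hsym c f hf hreal u v hne
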